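/- arXiv:2404.07181 — 2 statements merged into one kernel-verified Lean document; each statement's English description precedes it below -/
import Mathlib

section
/- Suppose q: R^m → R^N is differentiable with 1ᵀq(z) = Q constant and rank of the Jacobian ∂q/∂z equals N−1 at a point z. If for every coordinate z_i, (x + J q(z))ᵀ(∂q/∂z_i) = 0, where J is symmetric, then there exists λ ∈ R with x + J q(z) = λ·1. -/
open Matrix

/-- Theorem A.2, stationarity part: if `1ᵀq ≡ Q`, the Jacobian `∂q/∂z`
has rank `N − 1` at `z`, `J` is symmetric, and `(x + Jq(z))ᵀ(∂q/∂z_i) = 0` for all `i`,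
then `x + Jq(z) = λ·1` for some `λ`. -/
theorem reverse_qeq_stationarity {N m : ℕ} (x : Fin N → ℝ)
    (J : Matrix (Fin N) (Fin N) ℝ) (hJ : J.IsSymm)
    (q : (Fin m → ℝ) → (Fin N → ℝ)) (hq : Differentiable ℝ q)
    (Q : ℝ) (hconstraint : ∀ z, ∑ j, q z j = Q) (z : Fin m → ℝ)
    (hrank : (Matrix.of fun (j : Fin N) (i : Fin m) =>
      fderiv ℝ q z (Pi.single i 1) j).rank = N - 1)
    (hforce : ∀ i : Fin m, (x + J.mulVec (q z)) ⬝ᵥ fderiv ℝ q z (Pi.single i 1) = 0) :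
    ∃ lam : ℝ, x + J.mulVec (q z) = fun _ => lam := by
  classical
  rcases Nat.eq_zero_or_pos N with hN | hN
  · subst hN
    exact ⟨0, funext fun j => absurd j.isLt (by omega)⟩
  set v : Fin N → ℝ := x + J.mulVec (q z) with hv
  set M : Matrix (Fin N) (Fin m) ℝ :=
    Matrix.of fun (j : Fin N) (i : Fin m) => fderiv ℝ q z (Pi.single i 1) j with hM
  -- columns sum to zero
  have hcol0 : ∀ w : Fin m → ℝ, ∑ j, fderiv ℝ q z w j = 0 := by
    intro w
    set L : (Fin N → ℝ) →L[ℝ] ℝ := ∑ j, ContinuousLinearMap.proj j with hL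
    have hLapp : ∀ u : Fin N → ℝ, L u = ∑ j, u j := by
      intro u
      simp [hL, ContinuousLinearMap.sum_apply]
    have h1 : HasFDerivAt (fun z' => L (q z')) (L.comp (fderiv ℝ q z)) z :=
      L.hasFDerivAt.comp z (hq z).hasFDerivAt
    have h2 : (fun z' => L (q z')) = fun _ => Q := by
      funext z'; rw [hLapp, hconstraint]
    rw [h2] at h1
    have h3 : L.comp (fderiv ℝ q z) = 0 :=
      h1.unique (hasFDerivAt_const Q z)
    have := congrFun (congrArg DFunLike.coe h3) w
    simpa [hLapp] using this
  -- the sum functional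
  set l : (Fin N → ℝ) →ₗ[ℝ] ℝ := ∑ j, LinearMap.proj j with hl
  have hlapp : ∀ u : Fin N → ℝ, l u = ∑ j, u j := by
    intro u; simp [hl, LinearMap.sum_apply]
  have hWle : LinearMap.range M.mulVecLin ≤ LinearMap.ker l := by
    rintro _ ⟨w, rfl⟩
    rw [LinearMap.mem_ker, hlapp]
    simp only [Matrix.mulVecLin_apply, Matrix.mulVec, dotProduct]
    rw [Finset.sum_comm]
    have : ∀ i : Fin m, ∑ j, M j i * w i = 0 := by
      intro i
      rw [← Finset.sum_mul]
      have : ∑ j, M j i = 0 := hcol0 (Pi.single i 1)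
      rw [this, zero_mul]
    simp [this]
  have hrank' : Module.finrank ℝ (LinearMap.range M.mulVecLin) = N - 1 := hrank
  set j0 : Fin N := ⟨0, hN⟩
  have hlsurj : Function.Surjective l := by
    intro r
    refine ⟨Pi.single j0 r, ?_⟩
    rw [hlapp]
    simp
  have hker : Module.finrank ℝ (LinearMap.ker l) = N - 1 := by
    have h := LinearMap.finrank_range_add_finrank_ker l
    rw [LinearMap.range_eq_top.mpr hlsurj] at h
    simp [Module.finrank_pi] at h
    omega
  have hWeq : LinearMap.range M.mulVecLin = LinearMap.ker l :=
    Submodule.eq_of_le_of_finrank_le hWle (by rw [hker, hrank'])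
  have horth : ∀ u ∈ LinearMap.ker l, v ⬝ᵥ u = 0 := by
    rw [← hWeq]
    rintro _ ⟨w, rfl⟩
    rw [Matrix.mulVecLin_apply, Matrix.dotProduct_mulVec]
    have : Matrix.vecMul v M = 0 := by
      funext i
      have := hforce i
      simpa [Matrix.vecMul, hM, dotProduct, mul_comm] using this
    rw [this, zero_dotProduct]
  refine ⟨v j0, funext fun j => ?_⟩
  have hu : (Pi.single j 1 - Pi.single j0 1 : Fin N → ℝ) ∈ LinearMap.ker l := by
    rw [LinearMap.mem_ker, hlapp]
    simp [Finset.sum_sub_distrib]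
  have := horth _ hu
  have hdot : v ⬝ᵥ (Pi.single j 1 - Pi.single j0 1) = v j - v j0 := by
    rw [dotProduct_sub]
    simp [dotProduct_single]
  rw [hdot] at this
  linarith
end

section
/- Combining the previous results: let J be symmetric, strictly diagonally dominant with positive diagonal, x ∈ R^N, and q: R^m → R^N differentiable with 1ᵀq ≡ Q and rank(∂q/∂z) = N − 1 at z. If ∂/∂z_i[xᵀq + (1/2)qᵀJ(z)q] = (1/2)qᵀ(∂J/∂z_i)q for all i, then there exists λ such that q(z) is the unique global minimizer of L(q) = xᵀq + (1/2)qᵀJq − λ(1ᵀq − Q). -/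
/-!
Differentiating the energy and using the symmetry of `J z`, the force-matching condition says
`(x + J q) ⬝ᵥ ∂q/∂zᵢ = 0` for every `i`: `x + J q` lies in the left kernel of the Jacobian of `q`.
Differentiating the constraint puts the all-ones vector there as well, and the rank condition makes
that kernel a line, so `x + J q = λ 1`, i.e. `q z` is a critical point of the Lagrangian. By
Gershgorin's theorem the symmetric, strictly diagonally dominant matrix `J z` is positive
definite, so the Lagrangian is a strictly convex quadratic whose critical point is its unique
global minimizer.
-/

open Matrix

attribute [local instance] Matrix.normedAddCommGroup Matrix.normedSpace

namespace Matrix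

variable {n : Type*} [Fintype n]

theorem IsSymm.dotProduct_mulVec_comm {A : Matrix n n ℝ} (hA : A.IsSymm) (v w : n → ℝ) :
    v ⬝ᵥ A *ᵥ w = w ⬝ᵥ A *ᵥ v := by
  rw [dotProduct_mulVec, ← mulVec_transpose, hA.eq, dotProduct_comm]

theorem posDef_of_isSymm_of_sum_abs_lt_diag [DecidableEq n] {A : Matrix n n ℝ} (hA : A.IsSymm)
    (hdom : ∀ i, ∑ j ∈ Finset.univ.erase i, |A i j| < A i i) : A.PosDef := by
  have hH : A.IsHermitian := isHermitian_iff_isSymm.2 hA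
  refine hH.posDef_iff_eigenvalues_pos.2 fun i => ?_
  have hμ : Module.End.HasEigenvalue (toLin' A) (hH.eigenvalues i) :=
    Module.End.hasEigenvalue_iff_mem_spectrum.2
      ((spectrum_toLin' A).symm ▸ hH.eigenvalues_mem_spectrum_real i)
  obtain ⟨k, hk⟩ := eigenvalue_mem_ball hμ
  rw [Metric.mem_closedBall, Real.dist_eq] at hk
  simp only [Real.norm_eq_abs] at hk
  linarith [neg_abs_le (hH.eigenvalues i - A k k), hdom k]

theorem PosDef.quadratic_lt_of_add_mulVec_eq_zero {A : Matrix n n ℝ} (hA : A.PosDef)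
    {b q : n → ℝ} (hq : b + A *ᵥ q = 0) {p : n → ℝ} (hp : p ≠ q) :
    b ⬝ᵥ q + (1 / 2) * (q ⬝ᵥ A *ᵥ q) < b ⬝ᵥ p + (1 / 2) * (p ⬝ᵥ A *ᵥ p) := by
  have hpos : 0 < (p - q) ⬝ᵥ A *ᵥ (p - q) := by
    simpa using hA.dotProduct_mulVec_pos (sub_ne_zero.2 hp)
  have hsymm := (isHermitian_iff_isSymm.1 hA.isHermitian).dotProduct_mulVec_comm p q
  rw [eq_neg_of_add_eq_zero_left hq, neg_dotProduct, neg_dotProduct, dotProduct_comm _ q,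
    dotProduct_comm _ p]
  simp only [mulVec_sub, dotProduct_sub, sub_dotProduct] at hpos
  linarith

theorem exists_smul_eq_of_vecMul_eq_zero {K ι : Type*} [Field K] [Fintype ι]
    {M : Matrix n ι K} (hrank : M.rank = Fintype.card n - 1) {u v : n → K} (hu0 : u ≠ 0)
    (hu : u ᵥ* M = 0) (hv : v ᵥ* M = 0) : ∃ c : K, c • u = v := by
  have hn : 0 < Fintype.card n := Fintype.card_pos_iff.2 (Function.ne_iff.1 hu0).nonempty
  have hker : Module.finrank K (LinearMap.ker Mᵀ.mulVecLin) = 1 := by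
    have h := LinearMap.finrank_range_add_finrank_ker Mᵀ.mulVecLin
    rw [← rank, rank_transpose, hrank, Module.finrank_fintype_fun_eq_card] at h
    omega
  have hmem : ∀ {w : n → K}, w ᵥ* M = 0 → w ∈ LinearMap.ker Mᵀ.mulVecLin := fun hw => by
    rwa [LinearMap.mem_ker, mulVecLin_apply, mulVec_transpose]
  obtain ⟨c, hc⟩ :=
    (finrank_eq_one_iff_of_nonzero' ⟨u, hmem hu⟩ (by simpa using hu0)).1 hker ⟨v, hmem hv⟩
  exact ⟨c, congrArg Subtype.val hc⟩

end Matrix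

section Calculus

variable {E : Type*} [NormedAddCommGroup E] [NormedSpace ℝ E] {m n : Type*} [Fintype m]
  [Fintype n] {z : E}

theorem DifferentiableAt.dotProduct {f g : E → n → ℝ} (hf : DifferentiableAt ℝ f z)
    (hg : DifferentiableAt ℝ g z) : DifferentiableAt ℝ (fun y => f y ⬝ᵥ g y) z :=
  ((dotProductBilin ℝ ℝ (A := ℝ) (m := n)).toContinuousBilinearMap.hasFDerivAt_of_bilinear
    hf.hasFDerivAt hg.hasFDerivAt).differentiableAt

theorem fderiv_dotProduct_apply {f g : E → n → ℝ} (hf : DifferentiableAt ℝ f z)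
    (hg : DifferentiableAt ℝ g z) (e : E) :
    fderiv ℝ (fun y => f y ⬝ᵥ g y) z e = f z ⬝ᵥ fderiv ℝ g z e + fderiv ℝ f z e ⬝ᵥ g z :=
  congrArg (· e)
    ((dotProductBilin ℝ ℝ (A := ℝ) (m := n)).toContinuousBilinearMap.fderiv_of_bilinear hf hg)

theorem DifferentiableAt.mulVec {A : E → Matrix m n ℝ} {g : E → n → ℝ}
    (hA : DifferentiableAt ℝ A z) (hg : DifferentiableAt ℝ g z) :
    DifferentiableAt ℝ (fun y => A y *ᵥ g y) z :=
  ((mulVecBilin ℝ ℝ (A := ℝ) (m := m) (n := n)).toContinuousBilinearMap.hasFDerivAt_of_bilinear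
    hA.hasFDerivAt hg.hasFDerivAt).differentiableAt

theorem fderiv_mulVec_apply {A : E → Matrix m n ℝ} {g : E → n → ℝ}
    (hA : DifferentiableAt ℝ A z) (hg : DifferentiableAt ℝ g z) (e : E) :
    fderiv ℝ (fun y => A y *ᵥ g y) z e = A z *ᵥ fderiv ℝ g z e + fderiv ℝ A z e *ᵥ g z :=
  congrArg (· e)
    ((mulVecBilin ℝ ℝ (A := ℝ) (m := m) (n := n)).toContinuousBilinearMap.fderiv_of_bilinear
      hA hg)

theorem dotProduct_fderiv_eq_zero_of_dotProduct_eq_const (u : n → ℝ) {q : E → n → ℝ} {c : ℝ}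
    (hc : ∀ y, u ⬝ᵥ q y = c) (hq : DifferentiableAt ℝ q z) (e : E) :
    u ⬝ᵥ fderiv ℝ q z e = 0 := by
  have h := fderiv_dotProduct_apply (differentiableAt_const u) hq e
  simpa [funext hc] using h.symm

theorem fderiv_energy_apply (x : n → ℝ) {J : E → Matrix n n ℝ} {q : E → n → ℝ}
    (hJ : DifferentiableAt ℝ J z) (hq : DifferentiableAt ℝ q z) (hJz : (J z).IsSymm) (e : E) :
    fderiv ℝ (fun y => x ⬝ᵥ q y + (1 / 2) * (q y ⬝ᵥ J y *ᵥ q y)) z e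
      = (x + J z *ᵥ q z) ⬝ᵥ fderiv ℝ q z e + (1 / 2) * (q z ⬝ᵥ fderiv ℝ J z e *ᵥ q z) := by
  have hlin := fderiv_dotProduct_apply (differentiableAt_const x) hq e
  rw [fderiv_const_apply, _root_.zero_apply, zero_dotProduct, add_zero] at hlin
  have hquad := fderiv_dotProduct_apply hq (hJ.mulVec hq) e
  rw [fderiv_mulVec_apply hJ hq, dotProduct_add, hJz.dotProduct_mulVec_comm (q z)] at hquad
  rw [fderiv_fun_add ((differentiableAt_const x).dotProduct hq)
      ((hq.dotProduct (hJ.mulVec hq)).const_mul _), _root_.add_apply,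
    fderiv_const_mul (hq.dotProduct (hJ.mulVec hq)), _root_.smul_apply, smul_eq_mul, hlin, hquad,
    add_dotProduct, dotProduct_comm (J z *ᵥ q z)]
  ring

end Calculus

theorem reverse_qeq_full_general {N m : ℕ} (x : Fin N → ℝ)
    (J : (Fin m → ℝ) → Matrix (Fin N) (Fin N) ℝ) (q : (Fin m → ℝ) → (Fin N → ℝ))
    (hJdiff : Differentiable ℝ J) (hqdiff : Differentiable ℝ q)
    (hJsymm : ∀ z', (J z').IsSymm) (Q : ℝ) (z : Fin m → ℝ)
    (hdom : ∀ i, ∑ j ∈ Finset.univ.erase i, |J z i j| < J z i i)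
    (hconstraint : ∀ z', ∑ j, q z' j = Q)
    (hrank : (Matrix.of fun (j : Fin N) (i : Fin m) =>
      fderiv ℝ q z (Pi.single i 1) j).rank = N - 1)
    (hforce : ∀ i : Fin m,
      fderiv ℝ (fun z => x ⬝ᵥ q z + (1 / 2) * (q z ⬝ᵥ (J z).mulVec (q z))) z (Pi.single i 1)
        = (1 / 2) * (q z ⬝ᵥ (fderiv ℝ J z (Pi.single i 1)).mulVec (q z))) :
    ∃ lam : ℝ, ∀ p : Fin N → ℝ, p ≠ q z →
      x ⬝ᵥ q z + (1 / 2) * (q z ⬝ᵥ (J z).mulVec (q z)) - lam * ((∑ i, q z i) - Q)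
        < x ⬝ᵥ p + (1 / 2) * (p ⬝ᵥ (J z).mulVec p) - lam * ((∑ i, p i) - Q) := by
  set M : Matrix (Fin N) (Fin m) ℝ := Matrix.of fun j i => fderiv ℝ q z (Pi.single i 1) j
  have hone : 1 ᵥ* M = 0 := funext fun i =>
    dotProduct_fderiv_eq_zero_of_dotProduct_eq_const 1
      (fun y => (one_dotProduct _).trans (hconstraint y)) (hqdiff z) _
  have hgrad : (x + J z *ᵥ q z) ᵥ* M = 0 := funext fun i => by
    have h := hforce i
    rw [fderiv_energy_apply x (hJdiff z) (hqdiff z) (hJsymm z)] at h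
    exact add_eq_right.1 h
  obtain ⟨lam, hlam⟩ : ∃ lam : ℝ, lam • 1 = x + J z *ᵥ q z := by
    rcases isEmpty_or_nonempty (Fin N) with _ | _
    · exact ⟨0, Subsingleton.elim _ _⟩
    · exact exists_smul_eq_of_vecMul_eq_zero (by rwa [Fintype.card_fin]) one_ne_zero hone hgrad
  refine ⟨lam, fun p hp => ?_⟩
  have hJpos := posDef_of_isSymm_of_sum_abs_lt_diag (hJsymm z) hdom
  have hmin := hJpos.quadratic_lt_of_add_mulVec_eq_zero (b := x - lam • 1)
    (by rw [hlam, sub_add_cancel_left, neg_add_cancel]) hp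
  simp only [sub_dotProduct, smul_dotProduct, one_dotProduct, smul_eq_mul] at hmin
  linarith

/-- Theorem A.2, full: if `J(z)` is symmetric, strictly diagonally dominant
with positive diagonal, `1ᵀq ≡ Q`, the Jacobian of `q` has rank `N − 1` at `z`, and the
energy derivative matches the fixed-charge force in every coordinate, then there is a `λ`
making `q(z)` the unique global minimizer of the Lagrangian `L`. -/
theorem reverse_qeq_full {N m : ℕ} (x : Fin N → ℝ)
    (J : (Fin m → ℝ) → Matrix (Fin N) (Fin N) ℝ) (q : (Fin m → ℝ) → (Fin N → ℝ))
    (hJdiff : Differentiable ℝ J) (hqdiff : Differentiable ℝ q)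
    (hJsymm : ∀ z', (J z').IsSymm) (Q : ℝ) (z : Fin m → ℝ)
    (hdiag : ∀ i, 0 < J z i i)
    (hdom : ∀ i, ∑ j ∈ Finset.univ.erase i, |J z i j| < J z i i)
    (hconstraint : ∀ z', ∑ j, q z' j = Q)
    (hrank : (Matrix.of fun (j : Fin N) (i : Fin m) =>
      fderiv ℝ q z (Pi.single i 1) j).rank = N - 1)
    (hforce : ∀ i : Fin m,
      fderiv ℝ (fun z => x ⬝ᵥ q z + (1 / 2) * (q z ⬝ᵥ (J z).mulVec (q z))) z (Pi.single i 1)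
        = (1 / 2) * (q z ⬝ᵥ (fderiv ℝ J z (Pi.single i 1)).mulVec (q z))) :
    ∃ lam : ℝ, ∀ p : Fin N → ℝ, p ≠ q z →
      x ⬝ᵥ q z + (1 / 2) * (q z ⬝ᵥ (J z).mulVec (q z)) - lam * ((∑ i, q z i) - Q)
        < x ⬝ᵥ p + (1 / 2) * (p ⬝ᵥ (J z).mulVec p) - lam * ((∑ i, p i) - Q) :=
  reverse_qeq_full_general x J q hJdiff hqdiff hJsymm Q z hdom hconstraint hrank hforce
end
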